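/- arXiv:1904.02731 — 3 statements merged into one kernel-verified Lean document; each statement's English description precedes it below -/
import Mathlib

section
/- Let G be a finite group, H ≤ G a subgroup, x_1 = 1, x_2, …, x_s a complete set of representatives for the double cosets of H in G, and let V be an irreducible finite-dimensional complex representation of G. Then in the complex group algebra ℂ[G]: p_H · e_V = (dim V / |G|) · ∑_{i=1}^s |H ∩ x_i H x_i⁻¹| · χ_V(q_i^∨) · q_i, where q_i := (1/|H|) · ∑_{y ∈ Hx_iH} y and q_i^∨ := (1/|H|) · ∑_{y ∈ Hx_iH} y⁻¹. -/
open scoped Classical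

/-- The averaging idempotent `p_H = (1/|H|) ∑_{h ∈ H} h` in the complex group algebra. -/
noncomputable def avgIdemC {G : Type*} [Group G] [Fintype G] (H : Subgroup G) :
    MonoidAlgebra ℂ G :=
  (Nat.card H : ℂ)⁻¹ • ∑ h ∈ (H : Set G).toFinset, MonoidAlgebra.single h (1 : ℂ)

/-- The double coset `HxH` as a finset. -/
noncomputable def dosetFinset {G : Type*} [Group G] [Fintype G] (H : Subgroup G) (x : G) :
    Finset G :=
  {y : G | ∃ h ∈ H, ∃ h' ∈ H, y = h * x * h'}.toFinset

/-- `|H ∩ xHx⁻¹|`. -/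
noncomputable def interConjCard {G : Type*} [Group G] [Fintype G] (H : Subgroup G) (x : G) :
    ℕ :=
  Nat.card {g : G // g ∈ H ∧ ∃ h ∈ H, g = x * h * x⁻¹}

/-- The character of a finite-dimensional representation. -/
noncomputable def repChar {G V : Type*} [Group G] [AddCommGroup V] [Module ℂ V]
    (ρ : Representation ℂ G V) (g : G) : ℂ :=
  LinearMap.trace ℂ V (ρ g)

/-- Irreducibility: `V` is nonzero and has no proper nonzero `G`-invariant subspace. -/
def IsIrreducibleRep {G V : Type*} [Group G] [AddCommGroup V] [Module ℂ V]
    (ρ : Representation ℂ G V) : Prop :=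
  Nontrivial V ∧ ∀ W : Submodule ℂ V, (∀ g : G, ∀ v ∈ W, ρ g v ∈ W) → W = ⊥ ∨ W = ⊤

/-- The central idempotent `e_V = (dim V / |G|) ∑_{g} χ_V(g⁻¹) g` of `ℂ[G]`. -/
noncomputable def centralIdem {G V : Type*} [Group G] [Fintype G] [AddCommGroup V]
    [Module ℂ V] (ρ : Representation ℂ G V) : MonoidAlgebra ℂ G :=
  ((Module.finrank ℂ V : ℂ) / (Fintype.card G : ℂ)) •
    ∑ g : G, repChar ρ g⁻¹ • MonoidAlgebra.single g (1 : ℂ)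

/-- The Hecke algebra basis element `q_x = (1/|H|) ∑_{y ∈ HxH} y`. -/
noncomputable def heckeElt {G : Type*} [Group G] [Fintype G] (H : Subgroup G) (x : G) :
    MonoidAlgebra ℂ G :=
  (Nat.card H : ℂ)⁻¹ • ∑ y ∈ dosetFinset H x, MonoidAlgebra.single y (1 : ℂ)

/-!
Multiplying by `p_H` on the left turns the coefficient of `z` in `e_V` into
`(dim V / |G|) (1/|H|) ∑_{h ∈ H} χ_V(z⁻¹ h)`. By cyclicity of the trace this is constant on each
double coset `HxH`; averaging it over the `|H|²` products `a x b` (a, b ∈ H), each element of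
`HxH` being hit `|H ∩ xHx⁻¹|` times, identifies the constant as `|H ∩ xHx⁻¹| χ_V(q_x^∨) / |H|`.
Splitting the sum over `G` along the double cosets gives the formula.
-/

open Finset MonoidAlgebra

lemma repChar_mul_comm {G V : Type*} [Group G] [AddCommGroup V] [Module ℂ V]
    (ρ : Representation ℂ G V) (a b : G) : repChar ρ (a * b) = repChar ρ (b * a) := by
  simp only [repChar, map_mul, LinearMap.trace_mul_comm]

section

variable {G : Type*} [Group G] [Fintype G]

lemma mem_dosetFinset {H : Subgroup G} {x y : G} :
    y ∈ dosetFinset H x ↔ ∃ a ∈ H, ∃ b ∈ H, y = a * x * b := by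
  simp [dosetFinset]

section SubgroupSums

variable {M : Type*} [AddCommMonoid M] {H : Subgroup G}

lemma sum_toFinset_mul_mul {a b : G} (ha : a ∈ H) (hb : b ∈ H) (f : G → M) :
    ∑ h ∈ (H : Set G).toFinset, f (a * h * b) = ∑ h ∈ (H : Set G).toFinset, f h := by
  refine sum_nbij' (fun h => a * h * b) (fun h => a⁻¹ * h * b⁻¹) ?_ ?_ ?_ ?_ fun _ _ => rfl
  · simp only [Set.mem_toFinset, SetLike.mem_coe]
    exact fun h hh => H.mul_mem (H.mul_mem ha hh) hb
  · simp only [Set.mem_toFinset, SetLike.mem_coe]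
    exact fun h hh => H.mul_mem (H.mul_mem (H.inv_mem ha) hh) (H.inv_mem hb)
  · intro h _; group
  · intro h _; group

lemma sum_toFinset_inv (f : G → M) :
    ∑ h ∈ (H : Set G).toFinset, f h⁻¹ = ∑ h ∈ (H : Set G).toFinset, f h :=
  sum_nbij' (·⁻¹) (·⁻¹) (by simp) (by simp) (by simp) (by simp) fun _ _ => rfl

end SubgroupSums

lemma card_filter_mul_mul_eq {H : Subgroup G} {x y : G} (hy : y ∈ dosetFinset H x) :
    #{p ∈ (H : Set G).toFinset ×ˢ (H : Set G).toFinset | p.1 * x * p.2 = y} =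
      interConjCard H x := by
  obtain ⟨a, ha, b, hb, rfl⟩ := mem_dosetFinset.mp hy
  rw [interConjCard, Nat.card_eq_fintype_card, Fintype.card_subtype]
  refine card_nbij' (fun p => a⁻¹ * p.1) (fun k => (a * k, x⁻¹ * k⁻¹ * x * b))
    ?_ ?_ ?_ fun _ _ => by group
  · rintro ⟨h, h'⟩ hp
    simp only [coe_filter, mem_product, Set.mem_toFinset, SetLike.mem_coe] at hp
    obtain ⟨⟨hh, hh'⟩, heq⟩ := hp
    refine (mem_filter_univ _).mpr
      ⟨H.mul_mem (H.inv_mem ha) hh, b * h'⁻¹, H.mul_mem hb (H.inv_mem hh'), ?_⟩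
    calc a⁻¹ * h = a⁻¹ * (h * x * h') * h'⁻¹ * x⁻¹ := by group
      _ = x * (b * h'⁻¹) * x⁻¹ := by rw [heq]; group
  · intro k hk
    obtain ⟨hk, h₀, hh₀, rfl⟩ := (mem_filter_univ _).mp hk
    have hconj : x⁻¹ * (x * h₀ * x⁻¹)⁻¹ * x * b = h₀⁻¹ * b := by group
    simp only [coe_filter, mem_product, Set.mem_toFinset, SetLike.mem_coe, hconj]
    exact ⟨⟨H.mul_mem ha hk, H.mul_mem (H.inv_mem hh₀) hb⟩, by group⟩
  · rintro ⟨h, h'⟩ hp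
    simp only [coe_filter, mem_product, Set.mem_toFinset, SetLike.mem_coe] at hp
    refine Prod.ext (by group) ?_
    calc x⁻¹ * (a⁻¹ * h)⁻¹ * x * b = x⁻¹ * h⁻¹ * (a * x * b) := by group
      _ = h' := by rw [← hp.2]; group

lemma sum_product_mul_mul {M : Type*} [AddCommMonoid M] (H : Subgroup G) (x : G) (f : G → M) :
    ∑ p ∈ (H : Set G).toFinset ×ˢ (H : Set G).toFinset, f (p.1 * x * p.2) =
      interConjCard H x • ∑ y ∈ dosetFinset H x, f y := by
  rw [← sum_fiberwise_of_maps_to (g := fun p : G × G => p.1 * x * p.2) (t := dosetFinset H x),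
    smul_sum]
  · refine sum_congr rfl fun y hy => ?_
    rw [sum_congr rfl fun p hp => congrArg f (mem_filter.mp hp).2, sum_const,
      card_filter_mul_mul_eq hy]
  · rintro ⟨a, b⟩ hp
    simp only [mem_product, Set.mem_toFinset, SetLike.mem_coe] at hp
    exact mem_dosetFinset.mpr ⟨a, hp.1, b, hp.2, rfl⟩

section Character

variable {V : Type*} [AddCommGroup V] [Module ℂ V] (ρ : Representation ℂ G V) (H : Subgroup G)

lemma sum_repChar_inv_mul_of_mem_dosetFinset {x z : G} (hz : z ∈ dosetFinset H x) :
    ∑ h ∈ (H : Set G).toFinset, repChar ρ (z⁻¹ * h) =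
      ∑ h ∈ (H : Set G).toFinset, repChar ρ (x⁻¹ * h) := by
  obtain ⟨a, ha, b, hb, rfl⟩ := mem_dosetFinset.mp hz
  calc ∑ h ∈ (H : Set G).toFinset, repChar ρ ((a * x * b)⁻¹ * h)
      = ∑ h ∈ (H : Set G).toFinset, repChar ρ (x⁻¹ * (a⁻¹ * h * b⁻¹)) := by
        refine sum_congr rfl fun h _ => ?_
        rw [show (a * x * b)⁻¹ * h = b⁻¹ * (x⁻¹ * a⁻¹ * h) by group, repChar_mul_comm]
        group
    _ = ∑ h ∈ (H : Set G).toFinset, repChar ρ (x⁻¹ * h) :=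
        sum_toFinset_mul_mul (H.inv_mem ha) (H.inv_mem hb) fun h => repChar ρ (x⁻¹ * h)

lemma sum_product_repChar_inv (x : G) :
    ∑ p ∈ (H : Set G).toFinset ×ˢ (H : Set G).toFinset, repChar ρ (p.1 * x * p.2)⁻¹ =
      Nat.card H * ∑ h ∈ (H : Set G).toFinset, repChar ρ (x⁻¹ * h) := by
  have hinner : ∀ b ∈ (H : Set G).toFinset,
      ∑ a ∈ (H : Set G).toFinset, repChar ρ (a * x * b)⁻¹ =
        ∑ h ∈ (H : Set G).toFinset, repChar ρ (x⁻¹ * h) := by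
    intro b hb
    have hxb : x * b ∈ dosetFinset H x :=
      mem_dosetFinset.mpr ⟨1, H.one_mem, b, by simpa using hb, by group⟩
    calc ∑ a ∈ (H : Set G).toFinset, repChar ρ (a * x * b)⁻¹
        = ∑ a ∈ (H : Set G).toFinset, repChar ρ ((x * b)⁻¹ * a⁻¹) := by
          simp only [mul_inv_rev, mul_assoc]
      _ = ∑ a ∈ (H : Set G).toFinset, repChar ρ ((x * b)⁻¹ * a) :=
          sum_toFinset_inv fun a => repChar ρ ((x * b)⁻¹ * a)
      _ = _ := sum_repChar_inv_mul_of_mem_dosetFinset ρ H hxb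
  rw [sum_product_right, sum_congr rfl hinner, sum_const, nsmul_eq_mul]
  simp [Nat.card_eq_fintype_card]

lemma sum_repChar_inv_mul_eq_interConjCard_mul {x z : G} (hz : z ∈ dosetFinset H x) :
    ∑ h ∈ (H : Set G).toFinset, repChar ρ (z⁻¹ * h) =
      interConjCard H x * ((Nat.card H : ℂ)⁻¹ * ∑ y ∈ dosetFinset H x, repChar ρ y⁻¹) := by
  have hcount : (Nat.card H : ℂ) * ∑ h ∈ (H : Set G).toFinset, repChar ρ (x⁻¹ * h) =
      interConjCard H x * ∑ y ∈ dosetFinset H x, repChar ρ y⁻¹ := by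
    rw [← sum_product_repChar_inv, sum_product_mul_mul H x fun y => repChar ρ y⁻¹, nsmul_eq_mul]
  have hH : (Nat.card H : ℂ) ≠ 0 := Nat.cast_ne_zero.mpr Nat.card_pos.ne'
  rw [sum_repChar_inv_mul_of_mem_dosetFinset ρ H hz, mul_left_comm, ← hcount,
    inv_mul_cancel_left₀ hH]

end Character

lemma sum_single_one_mul_sum_smul_single {k : Type*} [CommSemiring k] (S : Finset G)
    (φ : G → k) :
    (∑ h ∈ S, single h (1 : k)) * ∑ g, φ g • single g (1 : k) =
      ∑ z, (∑ h ∈ S, φ (h⁻¹ * z)) • single z (1 : k) := by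
  have hrow : ∀ h, single h (1 : k) * ∑ g, φ g • single g (1 : k) =
      ∑ z, φ (h⁻¹ * z) • single z (1 : k) := fun h => by
    simp only [mul_sum, mul_smul_comm, single_mul_single, one_mul]
    exact Fintype.sum_equiv (Equiv.mulLeft h) _ _ fun g => by simp
  simp only [sum_mul, hrow, sum_smul]
  exact sum_comm

lemma sum_eq_sum_sum_dosetFinset {M ι : Type*} [AddCommMonoid M] [Fintype ι] {H : Subgroup G}
    {x : ι → G} (hreps : ∀ g : G, ∃! i, ∃ h ∈ H, ∃ h' ∈ H, g = h * x i * h') (f : G → M) :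
    ∑ z, f z = ∑ i, ∑ z ∈ dosetFinset H (x i), f z := by
  rw [← sum_biUnion fun i _ j _ hij => disjoint_left.mpr fun z hi hj =>
    hij ((hreps z).unique (mem_dosetFinset.mp hi) (mem_dosetFinset.mp hj))]
  congr
  ext z
  simpa [mem_dosetFinset] using (hreps z).exists

end

theorem avgIdem_mul_centralIdem_eq_general {G V : Type*} [Group G] [Fintype G]
    [AddCommGroup V] [Module ℂ V]
    (ρ : Representation ℂ G V)
    (H : Subgroup G) (s : ℕ) (x : Fin s → G)
    (hreps : ∀ g : G, ∃! i : Fin s, ∃ h ∈ H, ∃ h' ∈ H, g = h * x i * h') :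
    avgIdemC H * centralIdem ρ =
      ((Module.finrank ℂ V : ℂ) / (Fintype.card G : ℂ)) •
        ∑ i : Fin s,
          ((interConjCard H (x i) : ℂ) *
              ((Nat.card H : ℂ)⁻¹ * ∑ y ∈ dosetFinset H (x i), repChar ρ y⁻¹)) •
            heckeElt H (x i) := by
  unfold avgIdemC centralIdem heckeElt
  rw [smul_mul_assoc, mul_smul_comm, sum_single_one_mul_sum_smul_single, smul_comm,
    sum_eq_sum_sum_dosetFinset hreps]
  congr 1
  simp only [smul_sum, smul_smul]
  refine sum_congr rfl fun i _ => sum_congr rfl fun z hz => ?_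
  simp only [mul_inv_rev, inv_inv]
  rw [sum_repChar_inv_mul_eq_interConjCard_mul ρ H hz, mul_comm]

/-- For a complete set of double coset representatives `x 1 = 1, x 2, …, x s`
of `H` in `G` and an irreducible complex representation `V` of `G`,
`p_H · e_V = (dim V / |G|) ∑_i |H ∩ x_i H x_i⁻¹| · χ_V(q_i^∨) · q_i`,
where `χ_V(q_i^∨) = (1/|H|) ∑_{y ∈ H x_i H} χ_V(y⁻¹)`. -/
theorem avgIdem_mul_centralIdem_eq {G V : Type*} [Group G] [Fintype G]
    [AddCommGroup V] [Module ℂ V] [FiniteDimensional ℂ V]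
    (ρ : Representation ℂ G V) (hirr : IsIrreducibleRep ρ)
    (H : Subgroup G) (s : ℕ) (hs : 0 < s) (x : Fin s → G) (hx1 : x ⟨0, hs⟩ = 1)
    (hreps : ∀ g : G, ∃! i : Fin s, ∃ h ∈ H, ∃ h' ∈ H, g = h * x i * h') :
    avgIdemC H * centralIdem ρ =
      ((Module.finrank ℂ V : ℂ) / (Fintype.card G : ℂ)) •
        ∑ i : Fin s,
          ((interConjCard H (x i) : ℂ) *
              ((Nat.card H : ℂ)⁻¹ * ∑ y ∈ dosetFinset H (x i), repChar ρ y⁻¹)) •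
            heckeElt H (x i) :=
  avgIdem_mul_centralIdem_eq_general ρ H s x hreps
end

section
/- Let G be a finite group acting by group automorphisms on a divisible abelian group A, let H ≤ G be a subgroup of index s = [G:H], and let g_1, …, g_s ∈ G be simultaneous representatives for the left and right cosets of H in G (G is both the disjoint union of the H·g_j and of the g_j·H). Set N_H := ∑_{h∈H} h, N_G := ∑_{g∈G} g, S := ∑_{j=1}^s g_j in ℤ[G], and u := [G:H]·N_H − N_G ∈ ℤ[G]; let A_H := N_H·A, A_G := N_G·A and P := u·A. Then: (1) A_G ⊆ A_H and every z ∈ A_G satisfies S·z = [G:H]·z; (2) every z ∈ A_H with S·z = [G:H]·z satisfies [G:H]·z ∈ A_G; (3) every z ∈ P satisfies z ∈ A_H and S·z = 0; and (4) every z ∈ A_H with S·z = 0 satisfies [G:H]·|H|·z ∈ P. -/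
open scoped Classical

/-- `N_K := ∑_{k ∈ K} k ∈ ℤ[G]` for a subgroup `K` of `G`. -/
noncomputable def subgroupSumZ {G : Type*} [Group G] [Fintype G] (K : Subgroup G) :
    MonoidAlgebra ℤ G :=
  ∑ k ∈ (K : Set G).toFinset, MonoidAlgebra.single k (1 : ℤ)

/-- `N_G := ∑_{g ∈ G} g ∈ ℤ[G]`. -/
noncomputable def groupSumZ (G : Type*) [Group G] [Fintype G] : MonoidAlgebra ℤ G :=
  ∑ g : G, MonoidAlgebra.single g (1 : ℤ)

/-- Let `G` act on a divisible abelian group `A`, `H ≤ G` of index `s`, and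
`g 1, …, g s` simultaneous representatives of the left and right cosets of `H` in `G`.
With `N_H, N_G, S := ∑_j g_j` in `ℤ[G]`, `u := [G:H]·N_H − N_G`, `A_H := N_H·A`,
`A_G := N_G·A`, `P := u·A`:
(1) `A_G ⊆ A_H` and every `z ∈ A_G` satisfies `S·z = [G:H]·z`;
(2) every `z ∈ A_H` with `S·z = [G:H]·z` satisfies `[G:H]·z ∈ A_G`;
(3) every `z ∈ P` lies in `A_H` and satisfies `S·z = 0`;
(4) every `z ∈ A_H` with `S·z = 0` satisfies `[G:H]·|H|·z ∈ P`. -/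
theorem prym_complement_equations {G : Type*} [Group G] [Fintype G]
    (A : Type*) [AddCommGroup A] [Module (MonoidAlgebra ℤ G) A]
    (hdiv : ∀ n : ℕ, 0 < n → ∀ a : A, ∃ b : A, n • b = a)
    (H : Subgroup G) (g : Fin H.index → G)
    (hleft : ∀ y : G, ∃! j, ∃ h ∈ H, y = h * g j)
    (hright : ∀ y : G, ∃! j, ∃ h ∈ H, y = g j * h)
    (S : MonoidAlgebra ℤ G) (hS : S = ∑ j, MonoidAlgebra.single (g j) (1 : ℤ))
    (u : MonoidAlgebra ℤ G)
    (hu : u = (H.index : ℤ) • subgroupSumZ H - groupSumZ G) :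
    (∀ z : A, (∃ b : A, z = groupSumZ G • b) →
      (∃ b : A, z = subgroupSumZ H • b) ∧ S • z = (H.index : ℤ) • z) ∧
    (∀ z : A, (∃ b : A, z = subgroupSumZ H • b) → S • z = (H.index : ℤ) • z →
      ∃ b : A, (H.index : ℤ) • z = groupSumZ G • b) ∧
    (∀ z : A, (∃ b : A, z = u • b) →
      (∃ b : A, z = subgroupSumZ H • b) ∧ S • z = 0) ∧
    (∀ z : A, (∃ b : A, z = subgroupSumZ H • b) → S • z = 0 →
      ∃ b : A, (H.index * Nat.card H) • z = u • b) := by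
  classical
  set NH := subgroupSumZ H with hNH
  set NG := groupSumZ G with hNG
  have hmemF : ∀ x : G, x ∈ (H : Set G).toFinset ↔ x ∈ H := by
    intro x; simp
  -- S * NH = NG
  have hSNH : S * NH = NG := by
    rw [hS, hNH, subgroupSumZ, hNG, groupSumZ, Finset.sum_mul_sum]
    simp only [MonoidAlgebra.single_mul_single, mul_one]
    rw [← Finset.sum_product']
    apply Finset.sum_bij (fun p _ => g p.1 * p.2)
    · intro a ha; exact Finset.mem_univ _
    · rintro ⟨j, h⟩ ha ⟨j', h'⟩ ha' heq
      simp only [Finset.mem_product, Finset.mem_univ, true_and, hmemF] at ha ha'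
      obtain ⟨j₀, hj₀, huniq⟩ := hright (g j * h)
      have e1 : j = j' := by
        rw [huniq j ⟨h, ha, rfl⟩, huniq j' ⟨h', ha', heq⟩]
      subst e1
      have := mul_left_cancel heq
      exact Prod.ext rfl this
    · intro y _
      obtain ⟨j, ⟨h, hh, hy⟩, -⟩ := hright y
      exact ⟨⟨j, h⟩, Finset.mem_product.2 ⟨Finset.mem_univ _, (hmemF h).2 hh⟩, hy.symm⟩
    · intros; rfl
  -- NH * S = NG
  have hNHS : NH * S = NG := by
    rw [hS, hNH, subgroupSumZ, hNG, groupSumZ, Finset.sum_mul_sum]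
    simp only [MonoidAlgebra.single_mul_single, mul_one]
    rw [← Finset.sum_product']
    apply Finset.sum_bij (fun p _ => p.1 * g p.2)
    · intro a ha; exact Finset.mem_univ _
    · rintro ⟨h, j⟩ ha ⟨h', j'⟩ ha' heq
      simp only [Finset.mem_product, Finset.mem_univ, and_true, hmemF] at ha ha'
      obtain ⟨j₀, hj₀, huniq⟩ := hleft (h * g j)
      have e1 : j = j' := by
        rw [huniq j ⟨h, ha, rfl⟩, huniq j' ⟨h', ha', heq⟩]
      subst e1
      have := mul_right_cancel heq
      exact Prod.ext this rfl
    · intro y _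
      obtain ⟨j, ⟨h, hh, hy⟩, -⟩ := hleft y
      exact ⟨⟨h, j⟩, Finset.mem_product.2 ⟨(hmemF h).2 hh, Finset.mem_univ _⟩, hy.symm⟩
    · intros; rfl
  -- S * NG = index • NG
  have hSNG : S * NG = (H.index : ℤ) • NG := by
    rw [hS, Finset.sum_mul]
    have : ∀ j : Fin H.index, MonoidAlgebra.single (g j) (1 : ℤ) * NG = NG := by
      intro j
      rw [hNG, groupSumZ, Finset.mul_sum]
      simp only [MonoidAlgebra.single_mul_single, one_mul]
      exact Fintype.sum_equiv (Equiv.mulLeft (g j)) _ _ (fun x => by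
        simp [Equiv.coe_mulLeft])
    rw [Finset.sum_congr rfl (fun j _ => this j), Finset.sum_const]
    simp [Fintype.card_fin]
  -- NH * NH = |H| • NH
  have hcard : (H : Set G).toFinset.card = Nat.card H := by
    simp [Set.toFinset_card, Nat.card_eq_fintype_card]
  have hHH : NH * NH = (Nat.card H : ℤ) • NH := by
    rw [hNH, subgroupSumZ, Finset.sum_mul]
    have : ∀ h ∈ (H : Set G).toFinset,
        MonoidAlgebra.single h (1 : ℤ) * ∑ k ∈ (H : Set G).toFinset, MonoidAlgebra.single k (1:ℤ)
        = ∑ k ∈ (H : Set G).toFinset, MonoidAlgebra.single k (1:ℤ) := by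
      intro h hh
      rw [Finset.mul_sum]
      simp only [MonoidAlgebra.single_mul_single, one_mul]
      apply Finset.sum_bij (fun k _ => h * k)
      · intro k hk
        exact (hmemF _).2 (H.mul_mem ((hmemF h).1 hh) ((hmemF k).1 hk))
      · intro a _ b _ heq; exact mul_left_cancel heq
      · intro k hk
        refine ⟨h⁻¹ * k, ?_, by group⟩
        exact (hmemF _).2 (H.mul_mem (H.inv_mem ((hmemF h).1 hh)) ((hmemF k).1 hk))
      · intros; rfl
    rw [Finset.sum_congr rfl this, Finset.sum_const, hcard]
    simp
  -- now the four statements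
  have tower : ∀ (n : ℤ) (r : MonoidAlgebra ℤ G) (a : A), (n • r) • a = n • (r • a) := by
    intro n r a; rw [smul_assoc]
  refine ⟨?_, ?_, ?_, ?_⟩
  · rintro z ⟨b, rfl⟩
    constructor
    · exact ⟨S • b, by rw [← mul_smul, hNHS]⟩
    · rw [← mul_smul, hSNG, tower]
  · rintro z ⟨b, rfl⟩ hz
    exact ⟨b, by rw [← hz, ← mul_smul, hSNH]⟩
  · rintro z ⟨b, rfl⟩
    constructor
    · refine ⟨(H.index : ℤ) • b - S • b, ?_⟩
      rw [smul_sub, smul_comm, ← mul_smul NH S, hNHS, hu, sub_smul, tower]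
    · rw [← mul_smul]
      have : S * u = 0 := by
        rw [hu, mul_sub, mul_smul_comm, hSNH, hSNG, sub_self]
      rw [this, zero_smul]
  · rintro z ⟨b, rfl⟩ hz
    refine ⟨NH • b, ?_⟩
    have h1 : NH • (NH • b) = (Nat.card H : ℤ) • (NH • b) := by
      rw [← mul_smul, hHH, tower]
    have h2 : NG • (NH • b) = 0 := by
      rw [← hNHS, mul_smul, hz, smul_zero]
    rw [hu, sub_smul, tower, h1, h2, sub_zero, smul_smul, ← natCast_zsmul, Nat.cast_mul]
end

section
/- In the rational group algebra ℚ[S₄] of the symmetric group S₄, let H := {e, (12), (34), (12)(34)} (a Klein four subgroup), let D be the dihedral subgroup of order 8 generated by (1324) and (12) (which contains H), and let e_W := (1/8) · ∑_{g∈S₄} χ(g) · g, where χ(g) := (number of fixed points of g on {1,2,3,4}) − 1 is the character of the standard 3-dimensional representation of S₄. Then p_H · e_W = p_H − p_D, where p_H := (1/4)·∑_{h∈H} h and p_D := (1/8)·∑_{d∈D} d. -/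
open scoped Classical

/-- The character of the standard 3-dimensional representation of `S₄`:
`χ(g) = #fixed points of g − 1`. -/
def stdChar (g : Equiv.Perm (Fin 4)) : ℚ :=
  ((Finset.univ.filter fun i : Fin 4 => g i = i).card : ℚ) - 1

/-- The central idempotent `e_W = (1/8) ∑_{g ∈ S₄} χ(g) g` in `ℚ[S₄]` attached to the
standard representation. -/
noncomputable def stdIdem : MonoidAlgebra ℚ (Equiv.Perm (Fin 4)) :=
  (1 / 8 : ℚ) • ∑ g : Equiv.Perm (Fin 4), stdChar g • MonoidAlgebra.single g (1 : ℚ)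

/-- `p_H` for the Klein four subgroup `H = {e, (12), (34), (12)(34)}` of `S₄`
(in 0-indexed notation: `{1, swap 0 1, swap 2 3, swap 0 1 * swap 2 3}`). -/
noncomputable def pKlein : MonoidAlgebra ℚ (Equiv.Perm (Fin 4)) :=
  (1 / 4 : ℚ) •
    (MonoidAlgebra.single (1 : Equiv.Perm (Fin 4)) (1 : ℚ) +
      MonoidAlgebra.single (Equiv.swap (0 : Fin 4) 1) (1 : ℚ) +
      MonoidAlgebra.single (Equiv.swap (2 : Fin 4) 3) (1 : ℚ) +
      MonoidAlgebra.single (Equiv.swap (0 : Fin 4) 1 * Equiv.swap (2 : Fin 4) 3) (1 : ℚ))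

/-- The 4-cycle `(1324)` of `S₄` (0-indexed: the cycle `0 ↦ 2 ↦ 1 ↦ 3 ↦ 0`). -/
def fourCycle : Equiv.Perm (Fin 4) :=
  Equiv.swap (0 : Fin 4) 2 * Equiv.swap (2 : Fin 4) 1 * Equiv.swap (1 : Fin 4) 3

/-- The dihedral subgroup `D` of order 8 of `S₄` generated by `(1324)` and `(12)`. -/
def dihedralSubgroup : Subgroup (Equiv.Perm (Fin 4)) :=
  Subgroup.closure {fourCycle, Equiv.swap (0 : Fin 4) 1}

/-- `p_D = (1/8) ∑_{d ∈ D} d`. -/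
noncomputable def pDihedral : MonoidAlgebra ℚ (Equiv.Perm (Fin 4)) :=
  (1 / 8 : ℚ) •
    ∑ d ∈ (dihedralSubgroup : Set (Equiv.Perm (Fin 4))).toFinset,
      MonoidAlgebra.single d (1 : ℚ)

/- ### Auxiliary material -/

abbrev G4 := Equiv.Perm (Fin 4)

def rr : G4 := fourCycle
def ss : G4 := Equiv.swap 0 1

def Dfin : Finset G4 := {1, rr, rr*rr, rr*rr*rr, ss, rr*ss, rr*rr*ss, rr*rr*rr*ss}

def Ksub : Subgroup G4 where
  carrier := ↑Dfin
  one_mem' := by decide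
  mul_mem' := by decide
  inv_mem' := by decide

lemma dih_eq : dihedralSubgroup = Ksub := by
  apply le_antisymm
  · rw [dihedralSubgroup, Subgroup.closure_le]
    intro x hx
    rcases hx with h | h <;> subst h <;>
      · show _ ∈ Dfin
        decide
  · intro x hx
    have hr : rr ∈ dihedralSubgroup := Subgroup.subset_closure (by left; rfl)
    have hs : ss ∈ dihedralSubgroup := Subgroup.subset_closure (by right; rfl)
    have hx' : x ∈ Dfin := hx
    simp only [Dfin, Finset.mem_insert, Finset.mem_singleton] at hx'
    rcases hx' with h|h|h|h|h|h|h|h <;> subst h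
    · exact one_mem _
    · exact hr
    · exact mul_mem hr hr
    · exact mul_mem (mul_mem hr hr) hr
    · exact hs
    · exact mul_mem hr hs
    · exact mul_mem (mul_mem hr hr) hs
    · exact mul_mem (mul_mem (mul_mem hr hr) hr) hs

lemma dih_toFinset : (dihedralSubgroup : Set G4).toFinset = Dfin := by
  ext x; simp [dih_eq, Ksub]

lemma stdChar_eq (g : Equiv.Perm (Fin 4)) :
    stdChar g = (if g 0 = 0 then (1:ℚ) else 0) + (if g 1 = 1 then 1 else 0)
      + (if g 2 = 2 then 1 else 0) + (if g 3 = 3 then 1 else 0) - 1 := by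
  rw [stdChar, Finset.card_filter, Fin.sum_univ_four]
  push_cast [apply_ite]
  ring

lemma lemA (h : G4) :
    MonoidAlgebra.single h (1:ℚ) * (∑ g : G4, stdChar g • MonoidAlgebra.single g (1:ℚ))
      = ∑ g : G4, stdChar (h⁻¹ * g) • MonoidAlgebra.single g (1:ℚ) := by
  rw [Finset.mul_sum]
  refine Fintype.sum_equiv (Equiv.mulLeft h) _ _ fun x => ?_
  simp [MonoidAlgebra.single_mul_single, mul_smul_comm]

lemma lemB (x : G4) :
    (∑ g : G4, (if g = x then (1:ℚ) else 0) • MonoidAlgebra.single g (1:ℚ))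
      = MonoidAlgebra.single x (1:ℚ) := by
  simp [ite_smul]

lemma lemC (s : Finset G4) :
    (∑ g : G4, (if g ∈ s then (1:ℚ) else 0) • MonoidAlgebra.single g (1:ℚ))
      = ∑ d ∈ s, MonoidAlgebra.single d (1:ℚ) := by
  simp [ite_smul, Finset.sum_ite_mem]

def lhsCoef (g : G4) : ℚ :=
  (1/4) * (1/8) * (stdChar ((1 : G4)⁻¹ * g)
    + stdChar ((Equiv.swap (0 : Fin 4) 1)⁻¹ * g)
    + stdChar ((Equiv.swap (2 : Fin 4) 3)⁻¹ * g)
    + stdChar ((Equiv.swap (0 : Fin 4) 1 * Equiv.swap (2 : Fin 4) 3)⁻¹ * g))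

def rhsCoef (g : G4) : ℚ :=
  (1/4) * ((if g = (1 : G4) then (1:ℚ) else 0)
    + (if g = Equiv.swap (0 : Fin 4) 1 then (1:ℚ) else 0)
    + (if g = Equiv.swap (2 : Fin 4) 3 then (1:ℚ) else 0)
    + (if g = Equiv.swap (0 : Fin 4) 1 * Equiv.swap (2 : Fin 4) 3 then (1:ℚ) else 0))
  - (1/8) * (if g ∈ Dfin then (1:ℚ) else 0)

def sw01 : G4 := Equiv.swap 0 1
def sw12 : G4 := Equiv.swap 1 2
def sw23 : G4 := Equiv.swap 2 3

def L24 : Finset G4 :=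
  {1, sw01, sw12, sw23, sw12*sw01, sw23*sw01, sw01*sw12, sw23*sw12, sw12*sw23,
   sw01*sw12*sw01, sw23*sw12*sw01, sw12*sw23*sw01, sw23*sw01*sw12, sw12*sw23*sw12,
   sw01*sw12*sw23, sw23*sw01*sw12*sw01, sw12*sw23*sw12*sw01, sw01*sw12*sw23*sw01,
   sw12*sw23*sw01*sw12, sw01*sw12*sw23*sw12, sw12*sw23*sw01*sw12*sw01,
   sw01*sw12*sw23*sw12*sw01, sw01*sw12*sw23*sw01*sw12, sw01*sw12*sw23*sw01*sw12*sw01}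

lemma L24_univ : L24 = (Finset.univ : Finset G4) := by
  apply Finset.eq_univ_of_card
  rw [Fintype.card_perm]
  decide

lemma coef_eq : ∀ g : G4, lhsCoef g = rhsCoef g := by
  intro g
  have hg : g ∈ L24 := L24_univ ▸ Finset.mem_univ g
  simp only [L24, Finset.mem_insert, Finset.mem_singleton] at hg
  rcases hg with h|h|h|h|h|h|h|h|h|h|h|h|h|h|h|h|h|h|h|h|h|h|h|h <;> subst h <;>
    · simp (config := { decide := true }) only [lhsCoef, rhsCoef, stdChar_eq, Dfin,
        Finset.mem_insert, Finset.mem_singleton]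
      norm_num

lemma lhs_eq :
    pKlein * stdIdem = ∑ g : G4, lhsCoef g • MonoidAlgebra.single g (1:ℚ) := by
  rw [pKlein, stdIdem, smul_mul_assoc, mul_smul_comm, smul_smul,
    add_mul, add_mul, add_mul, lemA, lemA, lemA, lemA,
    ← Finset.sum_add_distrib, ← Finset.sum_add_distrib, ← Finset.sum_add_distrib,
    Finset.smul_sum]
  refine Finset.sum_congr rfl fun g _ => ?_
  rw [← add_smul, ← add_smul, ← add_smul, smul_smul]
  rfl

lemma rhs_eq :
    pKlein - pDihedral = ∑ g : G4, rhsCoef g • MonoidAlgebra.single g (1:ℚ) := by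
  rw [pKlein, pDihedral, dih_toFinset,
    ← lemB (1 : G4), ← lemB (Equiv.swap (0 : Fin 4) 1), ← lemB (Equiv.swap (2 : Fin 4) 3),
    ← lemB (Equiv.swap (0 : Fin 4) 1 * Equiv.swap (2 : Fin 4) 3), ← lemC Dfin,
    ← Finset.sum_add_distrib, ← Finset.sum_add_distrib, ← Finset.sum_add_distrib,
    Finset.smul_sum, Finset.smul_sum, ← Finset.sum_sub_distrib]
  refine Finset.sum_congr rfl fun g _ => ?_
  rw [← add_smul, ← add_smul, ← add_smul, smul_smul, smul_smul, ← sub_smul]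
  rfl

/-- In `ℚ[S₄]`, with `H` the Klein four subgroup `{e,(12),(34),(12)(34)}`,
`D` the dihedral subgroup of order 8 generated by `(1324)` and `(12)`, and `e_W` the
central idempotent of the standard representation: `p_H · e_W = p_H − p_D`. -/
theorem pKlein_mul_stdIdem : pKlein * stdIdem = pKlein - pDihedral := by
  rw [lhs_eq, rhs_eq]
  exact Finset.sum_congr rfl fun g _ => by rw [coef_eq]
end
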